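/- (Theorem 1, finite-support version) Let A be a finite set, p(·;φ) a differentiable positive distribution on A, ℓ : ℝ^d × A → ℝ differentiable in θ, L : ℝ^d → ℝ differentiable, α > 0, and define the expected update θ'(φ) = θ − α E_{a∼p(·;φ)}[∇_θ ℓ(θ, a)]. Then ∇_φ L(θ'(φ)) = −α E_{a∼p(·;φ)}[ ⟨∇_θ ℓ(θ, a), ∇ L(θ'(φ))⟩ · ∇_φ log p(a;φ) ], i.e. the policy gradient with reward r(a) = ⟨∇_θ ℓ(θ,a), ∇L(θ')⟩, scaled by −α, equals the exact meta-gradient. -/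

import Mathlib

open RealInnerProductSpace

/-!
The expected update `θ'(φ) = θ + ∑ₐ p(a;φ) • (-α ∇ℓ(θ,a))` is affine in the probabilities
`p(a;φ)` with fixed vectors, so the chain rule gives
`∇_φ L(θ'(φ)) = -α ∑ₐ ⟪∇ℓ(θ,a), ∇L(θ'(φ))⟫ ∇_φ p(a;φ)`. The log-derivative identity
`p ∇log p = ∇p` rewrites each term as `p(a;φ) • r(a) • ∇_φ log p(a;φ)`, i.e. as the
REINFORCE expectation, with no error term.
-/

variable {E F : Type*} [NormedAddCommGroup E] [InnerProductSpace ℝ E] [CompleteSpace E]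
  [NormedAddCommGroup F] [InnerProductSpace ℝ F] [CompleteSpace F]

theorem HasGradientAt.log {f : E → ℝ} {f' : E} {x : E} (hf : HasGradientAt f f' x)
    (hx : f x ≠ 0) : HasGradientAt (fun y => Real.log (f y)) ((f x)⁻¹ • f') x := by
  rw [hasGradientAt_iff_hasFDerivAt, map_smul]
  exact hf.hasFDerivAt.log hx

theorem smul_gradient_log_eq_gradient {f : E → ℝ} {x : E} (hf : DifferentiableAt ℝ f x)
    (hx : f x ≠ 0) : f x • gradient (fun y => Real.log (f y)) x = gradient f x := by
  rw [(hf.hasGradientAt.log hx).gradient, smul_inv_smul₀ hx]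

theorem HasGradientAt.comp_add_sum_smul {ι : Type*} [Fintype ι] {L : F → ℝ} {L' : F}
    {w : ι → E → ℝ} {w' : ι → E} {c : F} {v : ι → F} {x : E}
    (hL : HasGradientAt L L' (c + ∑ i, w i x • v i)) (hw : ∀ i, HasGradientAt (w i) (w' i) x) :
    HasGradientAt (fun y => L (c + ∑ i, w i y • v i)) (∑ i, ⟪v i, L'⟫ • w' i) x := by
  have hinner : HasFDerivAt (fun y => c + ∑ i, w i y • v i)
      (∑ i, (InnerProductSpace.toDual ℝ E (w' i)).smulRight (v i)) x :=
    (HasFDerivAt.fun_sum fun i _ => (hw i).hasFDerivAt.smul_const (v i)).const_add c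
  have hchain : (InnerProductSpace.toDual ℝ F L').comp
      (∑ i, (InnerProductSpace.toDual ℝ E (w' i)).smulRight (v i))
      = InnerProductSpace.toDual ℝ E (∑ i, ⟪v i, L'⟫ • w' i) := by
    ext u
    simp [real_inner_comm, mul_comm]
  rw [hasGradientAt_iff_hasFDerivAt, ← hchain]
  exact hL.hasFDerivAt.comp x hinner

theorem gar_policy_gradient_eq_meta_gradient_general (d m : ℕ) (A : Type) [Fintype A]
    (p : EuclideanSpace ℝ (Fin m) → A → ℝ)
    (hdiff : ∀ a, Differentiable ℝ (fun φ => p φ a))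
    (hpos : ∀ φ a, 0 < p φ a)
    (ℓ : EuclideanSpace ℝ (Fin d) → A → ℝ)
    (L : EuclideanSpace ℝ (Fin d) → ℝ) (hL : Differentiable ℝ L)
    (α : ℝ)
    (θ : EuclideanSpace ℝ (Fin d))
    (θ' : EuclideanSpace ℝ (Fin m) → EuclideanSpace ℝ (Fin d))
    (hθ' : ∀ φ, θ' φ = θ - α • ∑ a, p φ a • gradient (fun θ'' => ℓ θ'' a) θ)
    (φ₀ : EuclideanSpace ℝ (Fin m)) :
    gradient (fun φ => L (θ' φ)) φ₀
      = (-α) • ∑ a, p φ₀ a •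
          (⟪gradient (fun θ'' => ℓ θ'' a) θ, gradient L (θ' φ₀)⟫ •
            gradient (fun φ => Real.log (p φ a)) φ₀) := by
  have hθ'_mixture : ∀ φ, θ' φ = θ + ∑ a, p φ a • (-α) • gradient (fun θ'' => ℓ θ'' a) θ :=
    fun φ => by
      rw [hθ', sub_eq_add_neg, ← neg_smul, Finset.smul_sum]
      simp_rw [smul_comm (-α)]
  have hp : ∀ a, HasGradientAt (fun φ => p φ a) (gradient (fun φ => p φ a) φ₀) φ₀ :=
    fun a => (hdiff a φ₀).hasGradientAt
  have hmeta : HasGradientAt (fun φ => L (θ' φ))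
      (∑ a, ⟪(-α) • gradient (fun θ'' => ℓ θ'' a) θ, gradient L (θ' φ₀)⟫ •
        gradient (fun φ => p φ a) φ₀) φ₀ := by
    simp only [hθ'_mixture]
    exact (hL _).hasGradientAt.comp_add_sum_smul hp
  rw [hmeta.gradient, Finset.smul_sum]
  refine Finset.sum_congr rfl fun a _ => ?_
  rw [smul_comm (p φ₀ a), smul_gradient_log_eq_gradient (hdiff a φ₀) (hpos φ₀ a).ne',
    real_inner_smul_left, smul_smul]

/-- Theorem 1 (finite-support version): with the expected update
`θ'(φ) = θ − α E_{a∼p(·;φ)}[∇_θ ℓ(θ, a)]`, the policy gradient with the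
gradient-alignment reward `r(a) = ⟨∇_θ ℓ(θ,a), ∇L(θ'(φ))⟩`, scaled by `−α`,
equals the exact meta-gradient `∇_φ L(θ'(φ))`. -/
theorem gar_policy_gradient_eq_meta_gradient (d m : ℕ) (A : Type) [Fintype A]
    (p : EuclideanSpace ℝ (Fin m) → A → ℝ)
    (hdiff : ∀ a, Differentiable ℝ (fun φ => p φ a))
    (hpos : ∀ φ a, 0 < p φ a)
    (hsum : ∀ φ, ∑ a, p φ a = 1)
    (ℓ : EuclideanSpace ℝ (Fin d) → A → ℝ)
    (hℓ : ∀ a, Differentiable ℝ (fun θ => ℓ θ a))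
    (L : EuclideanSpace ℝ (Fin d) → ℝ) (hL : Differentiable ℝ L)
    (α : ℝ) (hα : 0 < α)
    (θ : EuclideanSpace ℝ (Fin d))
    (θ' : EuclideanSpace ℝ (Fin m) → EuclideanSpace ℝ (Fin d))
    (hθ' : ∀ φ, θ' φ = θ - α • ∑ a, p φ a • gradient (fun θ'' => ℓ θ'' a) θ)
    (φ₀ : EuclideanSpace ℝ (Fin m)) :
    gradient (fun φ => L (θ' φ)) φ₀
      = (-α) • ∑ a, p φ₀ a •
          (⟪gradient (fun θ'' => ℓ θ'' a) θ, gradient L (θ' φ₀)⟫ •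
            gradient (fun φ => Real.log (p φ a)) φ₀) :=
  gar_policy_gradient_eq_meta_gradient_general d m A p hdiff hpos ℓ L hL α θ θ' hθ' φ₀
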